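/- arXiv:1503.08528 — 2 statements merged into one kernel-verified Lean document; each statement's English description precedes it below -/
import Mathlib

section
/- If u ∈ V is well positioned (m(u) ≤ 2·MinMed), then for every z ∈ V, dist(z,u) ≤ 3·m(z). -/
/-! Two closed balls around `z` and `u`, each holding more than half of `V`, share a point `v`,
so `dist z u ≤ m(z) + m(u) ≤ 3·m(z)` by the triangle inequality and well-positionedness of `u`.
The only technical point is that the infimum defining the quantile distance is attained. -/

open Finset

/-- The `Q`-quantile distance of `u` to the finite point set `V`: the smallest radius `r`
such that the closed ball of radius `r` around `u` contains at least `Q` points of `V`. -/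
noncomputable def medDist {X : Type*} [MetricSpace X] (V : Finset X) (Q : ℕ) (u : X) : ℝ :=
  sInf {r : ℝ | Q ≤ (V.filter fun v => dist u v ≤ r).card}

/-- The median distance `m(u)`: the `⌈1+n/2⌉`-th smallest distance from `u` to `V`
(where `⌈1+n/2⌉ = (n+1)/2 + 1` using integer division). -/
noncomputable def med {X : Type*} [MetricSpace X] (V : Finset X) (u : X) : ℝ :=
  medDist V ((V.card + 1) / 2 + 1) u

namespace Finset

variable {ι : Type*} (s : Finset ι) (f : ι → ℝ) {Q : ℕ}

theorem isLeast_setOf_le_card_filter_le (hQ : 1 ≤ Q) (hQs : Q ≤ #s) :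
    ∃ r₀, IsLeast {r : ℝ | Q ≤ #(s.filter fun i => f i ≤ r)} r₀ := by
  set S := {r : ℝ | Q ≤ #(s.filter fun i => f i ≤ r)}
  have hs : s.Nonempty := card_pos.mp (by omega)
  -- Each `r ∈ S` can be lowered to a value of `f` still in `S`, so `S` has the same
  -- minimum as its finite trace on the values of `f`.
  have lower : ∀ r ∈ S, ∃ i ∈ s, f i ∈ S ∧ f i ≤ r := by
    intro r hr
    have hF : (s.filter fun i => f i ≤ r).Nonempty := card_pos.mp (Nat.lt_of_lt_of_le hQ hr)
    obtain ⟨i, hi, hmax⟩ := exists_mem_eq_sup' hF f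
    refine ⟨i, (mem_filter.mp hi).1, ?_, (mem_filter.mp hi).2⟩
    refine hr.trans (card_le_card fun j hj => mem_filter.mpr ⟨(mem_filter.mp hj).1, ?_⟩)
    exact hmax ▸ le_sup' f hj
  set D := (s.image f).filter (· ∈ S)
  have hD : D.Nonempty := by
    have hsup : s.filter (fun i => f i ≤ s.sup' hs f) = s :=
      filter_true_of_mem fun i hi => le_sup' f hi
    obtain ⟨i, hi, hiS, -⟩ := lower (s.sup' hs f) (by simpa only [S, Set.mem_ofPred_eq, hsup])
    exact ⟨f i, mem_filter.mpr ⟨mem_image_of_mem f hi, hiS⟩⟩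
  refine ⟨D.min' hD, (mem_filter.mp (D.min'_mem hD)).2, fun r hr => ?_⟩
  obtain ⟨i, hi, hiS, hir⟩ := lower r hr
  exact (D.min'_le _ (mem_filter.mpr ⟨mem_image_of_mem f hi, hiS⟩)).trans hir

theorem le_card_filter_le_sInf (hQ : 1 ≤ Q) (hQs : Q ≤ #s) :
    Q ≤ #(s.filter fun i => f i ≤ sInf {r : ℝ | Q ≤ #(s.filter fun i => f i ≤ r)}) := by
  obtain ⟨r₀, hr₀⟩ := isLeast_setOf_le_card_filter_le s f hQ hQs
  exact hr₀.csInf_mem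

end Finset

section MedDist

variable {X : Type*} [MetricSpace X] {V : Finset X} {Q : ℕ}

theorem le_card_filter_dist_le_medDist (hQ : 1 ≤ Q) (hQV : Q ≤ #V) (u : X) :
    Q ≤ #(V.filter fun v => dist u v ≤ medDist V Q u) :=
  V.le_card_filter_le_sInf (dist u) hQ hQV

theorem dist_le_medDist_add_medDist (hQV : Q ≤ #V) (hVQ : #V < 2 * Q) (z u : X) :
    dist z u ≤ medDist V Q z + medDist V Q u := by
  classical
  have hQ : 1 ≤ Q := by omega
  obtain ⟨v, hv⟩ := inter_nonempty_of_card_lt_card_add_card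
    (filter_subset (fun v => dist z v ≤ medDist V Q z) V)
    (filter_subset (fun v => dist u v ≤ medDist V Q u) V) <| by
      linarith [le_card_filter_dist_le_medDist hQ hQV z, le_card_filter_dist_le_medDist hQ hQV u]
  obtain ⟨hvz, hvu⟩ := mem_inter.mp hv
  calc dist z u ≤ dist z v + dist u v := dist_triangle_right z u v
    _ ≤ medDist V Q z + medDist V Q u := add_le_add (mem_filter.mp hvz).2 (mem_filter.mp hvu).2

end MedDist

theorem stmt5_general {X : Type*} [MetricSpace X] (V : Finset X)
    (hQ : (V.card + 1) / 2 + 1 ≤ V.card)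
    (u : X) (hwp : ∀ w ∈ V, med V u ≤ 2 * med V w) :
    ∀ z ∈ V, dist z u ≤ 3 * med V z := by
  intro z hz
  have hmed : dist z u ≤ med V z + med V u :=
    dist_le_medDist_add_medDist hQ (by omega) z u
  linarith [hwp z hz]

/-- If `u ∈ V` is well positioned (`m(u) ≤ 2·MinMed`, i.e. `m(u) ≤ 2·m(w)`
for every `w ∈ V`), then for every `z ∈ V`, `dist z u ≤ 3·m(z)`. -/
theorem stmt5 {X : Type*} [MetricSpace X] (V : Finset X)
    (hQ : (V.card + 1) / 2 + 1 ≤ V.card)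
    (u : X) (hu : u ∈ V) (hwp : ∀ w ∈ V, med V u ≤ 2 * med V w) :
    ∀ z ∈ V, dist z u ≤ 3 * med V z :=
  stmt5_general V hQ u hwp
end

section
/- Assume n is even and let z ∈ V minimize W over V (the 1-median). Then at least n/2 points v ∈ V satisfy W(v) ≤ 3·W(z). -/
/-!
The ball of radius `2 W(z) / n` around any point `z` contains at least half of `V`, by Markov's
inequality applied to the distances `dist z v`. For `v` in that ball the triangle inequality through
`z` gives `W(v) ≤ n · dist v z + W(z) ≤ 3 W(z)`.
-/

open Finset

/-- Markov's inequality for the counting measure on `s`, at twice the mean of `f`. -/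
theorem Finset.card_le_two_mul_card_filter_card_mul_le_two_mul_sum {ι K : Type*} [Field K]
    [LinearOrder K] [IsStrictOrderedRing K] (s : Finset ι) (f : ι → K)
    (hf : ∀ i ∈ s, 0 ≤ f i) :
    #s ≤ 2 * #{i ∈ s | #s * f i ≤ 2 * ∑ j ∈ s, f j} := by
  set S := ∑ j ∈ s, f j
  by_contra! hfew
  set bad := {i ∈ s | ¬ #s * f i ≤ 2 * S}
  have hcard : #{i ∈ s | #s * f i ≤ 2 * S} + #bad = #s :=
    card_filter_add_card_filter_not _
  have hbad : bad.Nonempty := card_pos.mp (by omega)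
  have hlt : #bad * (2 * S) < #s * S :=
    calc (#bad : K) * (2 * S) = ∑ _ ∈ bad, 2 * S := by simp
      _ < ∑ i ∈ bad, #s * f i :=
        sum_lt_sum_of_nonempty hbad fun i hi => not_le.mp (mem_filter.mp hi).2
      _ ≤ ∑ i ∈ s, #s * f i :=
        sum_le_sum_of_subset_of_nonneg (filter_subset _ _) fun i hi _ =>
          mul_nonneg (Nat.cast_nonneg _) (hf i hi)
      _ = #s * S := by rw [mul_sum]
  have htwice : (#s : K) ≤ 2 * #bad := by exact_mod_cast (by omega : #s ≤ 2 * #bad)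
  have hS : 0 ≤ S := sum_nonneg hf
  nlinarith [mul_le_mul_of_nonneg_right htwice hS]

theorem sum_dist_le_card_mul_dist_add_sum_dist {X : Type*} [PseudoMetricSpace X] (V : Finset X)
    (v z : X) : ∑ x ∈ V, dist v x ≤ #V * dist z v + ∑ x ∈ V, dist z x :=
  calc ∑ x ∈ V, dist v x ≤ ∑ x ∈ V, (dist z v + dist z x) :=
        sum_le_sum fun x _ => dist_triangle_left v x z
    _ = #V * dist z v + ∑ x ∈ V, dist z x := by
        rw [sum_add_distrib, sum_const, nsmul_eq_mul]

theorem stmt14_general {X : Type*} [MetricSpace X] (V : Finset X)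
    (z : X) :
    V.card / 2 ≤
      (V.filter fun v => (∑ x ∈ V, dist v x) ≤ 3 * ∑ x ∈ V, dist z x).card := by
  have hhalf := V.card_le_two_mul_card_filter_card_mul_le_two_mul_sum (dist z ·)
    fun _ _ => dist_nonneg
  have hball : {v ∈ V | #V * dist z v ≤ 2 * ∑ x ∈ V, dist z x} ⊆
      {v ∈ V | ∑ x ∈ V, dist v x ≤ 3 * ∑ x ∈ V, dist z x} :=
    monotone_filter_right V fun v _ hv => by
      linarith [sum_dist_le_card_mul_dist_add_sum_dist V v z]
  have := card_le_card hball
  omega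

/-- If `n` is even and `z ∈ V` is the 1-median (minimizes `W` over `V`),
then at least `n/2` points `v ∈ V` satisfy `W(v) ≤ 3·W(z)`. -/
theorem stmt14 {X : Type*} [MetricSpace X] (V : Finset X) (hn : Even V.card)
    (z : X) (hz : z ∈ V) (hmed : ∀ w ∈ V, (∑ x ∈ V, dist z x) ≤ ∑ x ∈ V, dist w x) :
    V.card / 2 ≤
      (V.filter fun v => (∑ x ∈ V, dist v x) ≤ 3 * ∑ x ∈ V, dist z x).card :=
  stmt14_general V z
end
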